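/- arXiv:2511.16538 — 3 statements merged into one kernel-verified Lean document; each statement's English description precedes it below -/
import Mathlib

section
/- Let h(x) = x(x+1)(x+2)(x+3)(2x+3). The function 1/h, extended by taking value 0 at x = ∞ appropriately, is harmonic for the Markov chain with transitions p(x,x±1), p(x,x): for every integer x ≥ 2, p(x,x+1)/h(x+1) + p(x,x)/h(x) + p(x,x-1)/h(x-1) = 1/h(x), where p(x,x+1) = (x+4)(2x+5)/(3(x+2)(2x+3)), p(x,x) = x(x+3)/(3(x+1)(x+2)), p(x,x-1) = (x-1)(2x+1)/(3(x+1)(2x+3)). -/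
/-!
Each of the three terms collapses, after cancelling the factors it shares with the transition
probability, to `1 / (3 (x+1)(x+2)(2x+3) q)` with `q = (x+2)(x+3)`, `(x+1)(x+2)` or `x(x+1)`
respectively; since `x(x+1) + x(x+3) + (x+2)(x+3) = 3(x+1)(x+2)`, the sum is `1 / h x`.
-/

def h (x : ℚ) : ℚ := x * (x + 1) * (x + 2) * (x + 3) * (2 * x + 3)
def pUp (x : ℚ) : ℚ := (x + 4) * (2 * x + 5) / (3 * (x + 2) * (2 * x + 3))
def pStay (x : ℚ) : ℚ := x * (x + 3) / (3 * (x + 1) * (x + 2))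
def pDown (x : ℚ) : ℚ := (x - 1) * (2 * x + 1) / (3 * (x + 1) * (2 * x + 3))

lemma pUp_div_h_add_one {x : ℚ} (hx : 0 < x) :
    pUp x / h (x + 1) = 1 / (3 * (x + 1) * (x + 2) ^ 2 * (x + 3) * (2 * x + 3)) := by
  have : x + 4 ≠ 0 := by positivity
  have : 2 * x + 5 ≠ 0 := by positivity
  unfold pUp h
  field_simp
  ring

lemma pStay_div_h {x : ℚ} (hx : 0 < x) :
    pStay x / h x = 1 / (3 * (x + 1) ^ 2 * (x + 2) ^ 2 * (2 * x + 3)) := by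
  have : x ≠ 0 := hx.ne'
  have : x + 3 ≠ 0 := by positivity
  unfold pStay h
  field_simp

lemma pDown_div_h_sub_one {x : ℚ} (hx : 1 < x) :
    pDown x / h (x - 1) = 1 / (3 * x * (x + 1) ^ 2 * (x + 2) * (2 * x + 3)) := by
  have : x - 1 ≠ 0 := sub_ne_zero.mpr hx.ne'
  have : 0 < x := by linarith
  have : 2 * x + 1 ≠ 0 := by positivity
  have h_sub_one : h (x - 1) = (x - 1) * x * (x + 1) * (x + 2) * (2 * x + 1) := by
    unfold h
    ring
  unfold pDown
  rw [h_sub_one]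
  field_simp

lemma inv_h_harmonic_of_one_lt {x : ℚ} (hx : 1 < x) :
    pUp x / h (x + 1) + pStay x / h x + pDown x / h (x - 1) = 1 / h x := by
  have hx₀ : 0 < x := by linarith
  rw [pUp_div_h_add_one hx₀, pStay_div_h hx₀, pDown_div_h_sub_one hx]
  unfold h
  have : x + 3 ≠ 0 := by positivity
  field_simp
  ring

theorem inv_h_harmonic (x : ℕ) (hx : 2 ≤ x) :
    pUp x / h ((x : ℚ) + 1) + pStay x / h x + pDown x / h ((x : ℚ) - 1)
      = 1 / h x :=
  inv_h_harmonic_of_one_lt (by exact_mod_cast hx)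
end

section
/- Define A_{x,k} for integers x ≥ k ≥ 0 by A_{k,k} = 0 and A_{x,k} = (k+2) + (x-k-1)(x+k+4)/2 for x ≥ k+1. Then A satisfies the recurrence p*_x (A_{x+1,k} - A_{x,k}) = q*_x (A_{x,k} - A_{x-1,k}) - 1 for all x ≥ k+1, where p*_x = x/(3(x+2)) and q*_x = (x+3)/(3(x+1)). -/
/-! On `x ≥ k` the forward difference `A (x + 1) k - A x k` is `x + 2`, so the recurrence reduces to
`pStar x * (x + 2) = qStar x * (x + 1) - 1`, i.e. `x / 3 = (x + 3) / 3 - 1`. -/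

def A (x k : ℤ) : ℚ :=
  if x = k then 0 else ((k : ℚ) + 2) + ((x : ℚ) - k - 1) * ((x : ℚ) + k + 4) / 2

def pStar (x : ℚ) : ℚ := x / (3 * (x + 2))
def qStar (x : ℚ) : ℚ := (x + 3) / (3 * (x + 1))

theorem A_add_one_sub {k x : ℤ} (h : k ≤ x) : A (x + 1) k - A x k = x + 2 := by
  rcases h.eq_or_lt with rfl | hlt
  · simp only [A, if_neg (by omega : k + 1 ≠ k)]
    push_cast
    ring
  · simp only [A, if_neg (by omega : x + 1 ≠ k), if_neg hlt.ne']
    push_cast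
    ring

theorem A_recurrence (k x : ℤ) (hk : 0 ≤ k) (hx : k + 1 ≤ x) :
    pStar x * (A (x + 1) k - A x k) = qStar x * (A x k - A (x - 1) k) - 1 := by
  have hx_pos : (0 : ℚ) < x := by exact_mod_cast (by omega : 0 < x)
  have hprev : A x k - A (x - 1) k = (x : ℚ) + 1 := by
    have h := A_add_one_sub (show k ≤ x - 1 by omega)
    rw [sub_add_cancel] at h
    rw [h]
    push_cast
    ring
  rw [A_add_one_sub (by omega : k ≤ x), hprev, pStar, qStar]
  field_simp
  ring
end

section
/- For integers x ≥ k ≥ 0, the solution of the recurrence A_{k,k} = 0, A_{k+1,k} = k+2, and A_{x+1,k} - A_{x,k} = (k+2)·(x+3)(x+2)²(x+1)/((k+1)(k+2)²(k+3)) - ∑_{y=k+1}^{x} 3(x+1)(x+2)²(x+3)/(y(y+1)(y+2)(y+3)) is given in closed form by A_{x,k} = (k+2) + (x-k-1)(x+k+4)/2 for x ≥ k+1. -/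
/-!
Partial fractions make the sum telescope:
`1 / (y (y+1) (y+2) (y+3)) = g y - g (y+1)` with `g y = 1 / (3 y (y+1) (y+2))`.
The telescoped sum cancels the first term of the increment exactly, leaving
`A (x+1) - A x = x + 2`, and summing these increments gives the closed form.
-/

open Finset

section
variable {K : Type*} [Field K] [LinearOrder K] [IsStrictOrderedRing K]

lemma one_div_four_consecutive_eq_sub {y : ℕ} (hy : y ≠ 0) :
    1 / ((y : K) * (y + 1) * (y + 2) * (y + 3))
      = 1 / (3 * (y : K) * (y + 1) * (y + 2)) - 1 / (3 * ((y : K) + 1) * (y + 2) * (y + 3)) := by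
  field_simp
  ring

lemma sum_Icc_one_div_four_consecutive {k x : ℕ} (hkx : k ≤ x) :
    ∑ y ∈ Icc (k + 1) x, 1 / ((y : K) * (y + 1) * (y + 2) * (y + 3))
      = 1 / (3 * ((k : K) + 1) * (k + 2) * (k + 3))
        - 1 / (3 * ((x : K) + 1) * (x + 2) * (x + 3)) := by
  let g : ℕ → K := fun y ↦ 1 / (3 * (y : K) * (y + 1) * (y + 2))
  calc ∑ y ∈ Icc (k + 1) x, 1 / ((y : K) * (y + 1) * (y + 2) * (y + 3))
      = ∑ y ∈ Ico (k + 1) (x + 1), -(g (y + 1) - g y) := by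
        rw [Ico_add_one_right_eq_Icc]
        refine sum_congr rfl fun y hy ↦ ?_
        rw [one_div_four_consecutive_eq_sub (by grind)]
        push_cast [g]
        ring
    _ = g (k + 1) - g (x + 1) := by
        rw [sum_neg_distrib, sum_Ico_sub g (by omega), neg_sub]
    _ = _ := by
        push_cast [g]
        ring

lemma increment_eq_add_two {k x : ℕ} (hkx : k ≤ x) :
    ((k : K) + 2) * ((x : K) + 3) * ((x : K) + 2) ^ 2 * ((x : K) + 1)
        / (((k : K) + 1) * ((k : K) + 2) ^ 2 * ((k : K) + 3))
      - ∑ y ∈ Icc (k + 1) x,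
          3 * ((x : K) + 1) * ((x : K) + 2) ^ 2 * ((x : K) + 3)
            / ((y : K) * ((y : K) + 1) * ((y : K) + 2) * ((y : K) + 3))
      = (x : K) + 2 := by
  simp_rw [← mul_one_div (3 * ((x : K) + 1) * ((x : K) + 2) ^ 2 * ((x : K) + 3)), ← mul_sum,
    sum_Icc_one_div_four_consecutive hkx]
  field_simp
  ring

lemma eq_of_sub_eq_add_two {A : ℕ → K} {k : ℕ} (hk : A (k + 1) = (k : K) + 2)
    (hstep : ∀ x : ℕ, k + 1 ≤ x → A (x + 1) - A x = (x : K) + 2) {x : ℕ} (hkx : k + 1 ≤ x) :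
    A x = ((k : K) + 2) + ((x : K) - k - 1) * ((x : K) + k + 4) / 2 := by
  induction x, hkx using Nat.le_induction with
  | base => rw [hk]; push_cast; ring
  | succ x hkx ih =>
    rw [← sub_add_cancel (A (x + 1)) (A x), hstep x hkx, ih]
    push_cast
    ring

end

theorem A_closed_form_general (k : ℕ) (A : ℕ → ℚ)
    (h1 : A (k + 1) = (k : ℚ) + 2)
    (hrec : ∀ x : ℕ, k + 1 ≤ x →
      A (x + 1) - A x
        = ((k : ℚ) + 2) * ((x : ℚ) + 3) * ((x : ℚ) + 2) ^ 2 * ((x : ℚ) + 1)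
            / (((k : ℚ) + 1) * ((k : ℚ) + 2) ^ 2 * ((k : ℚ) + 3))
          - ∑ y ∈ Finset.Icc (k + 1) x,
              3 * ((x : ℚ) + 1) * ((x : ℚ) + 2) ^ 2 * ((x : ℚ) + 3)
                / ((y : ℚ) * ((y : ℚ) + 1) * ((y : ℚ) + 2) * ((y : ℚ) + 3))) :
    ∀ x : ℕ, k + 1 ≤ x →
      A x = ((k : ℚ) + 2) + ((x : ℚ) - k - 1) * ((x : ℚ) + k + 4) / 2 :=
  fun _ ↦ eq_of_sub_eq_add_two h1 fun x hx ↦ (hrec x hx).trans (increment_eq_add_two (by omega))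

theorem A_closed_form (k : ℕ) (A : ℕ → ℚ)
    (h0 : A k = 0) (h1 : A (k + 1) = (k : ℚ) + 2)
    (hrec : ∀ x : ℕ, k + 1 ≤ x →
      A (x + 1) - A x
        = ((k : ℚ) + 2) * ((x : ℚ) + 3) * ((x : ℚ) + 2) ^ 2 * ((x : ℚ) + 1)
            / (((k : ℚ) + 1) * ((k : ℚ) + 2) ^ 2 * ((k : ℚ) + 3))
          - ∑ y ∈ Finset.Icc (k + 1) x,
              3 * ((x : ℚ) + 1) * ((x : ℚ) + 2) ^ 2 * ((x : ℚ) + 3)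
                / ((y : ℚ) * ((y : ℚ) + 1) * ((y : ℚ) + 2) * ((y : ℚ) + 3))) :
    ∀ x : ℕ, k + 1 ≤ x →
      A x = ((k : ℚ) + 2) + ((x : ℚ) - k - 1) * ((x : ℚ) + k + 4) / 2 :=
  A_closed_form_general k A h1 hrec
end
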